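/- arXiv:2605.09376 — 2 statements merged into one kernel-verified Lean document; each statement's English description precedes it below -/
import Mathlib

section
/- Under the discrete mismatch setup with e_0 = 0, let g : X → ℝ be an L_g-Lipschitz constraint function (L_g ≥ 0), and define the tightening ε_t = L_g · Σ_{k=0}^{t−1} L_f^{t−1−k} ‖Δ(x^true_k, u_k)‖. If the planned state satisfies the tightened constraint g(x_t) + ε_t ≤ 0, then the true state satisfies the original constraint: g(x^true_t) ≤ 0. -/
/-!
The tracking error `eₜ = x^trueₜ - xₜ` satisfies `‖eₜ₊₁‖ ≤ ‖Δ(x^trueₜ, uₜ)‖ + L_f ‖eₜ‖`: split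
`f_t(x^trueₜ, uₜ) - f_p(xₜ, uₜ)` at `f_p(x^trueₜ, uₜ)`. Unrolling this recursion from `e₀ = 0`
(a discrete Grönwall inequality) gives `L_g ‖eₜ‖ ≤ εₜ`, and the Lipschitz bound on `g` turns
this into `g(x^trueₜ) ≤ g(xₜ) + εₜ ≤ 0`.
-/

open Finset

theorem le_sum_pow_mul_of_le_add_mul {a d : ℕ → ℝ} {L : ℝ} (hL : 0 ≤ L) (h0 : a 0 ≤ 0)
    (hstep : ∀ n, a (n + 1) ≤ d n + L * a n) (n : ℕ) :
    a n ≤ ∑ k ∈ range n, L ^ (n - 1 - k) * d k := by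
  induction n with
  | zero => simpa using h0
  | succ n ih =>
    calc a (n + 1) ≤ d n + L * a n := hstep n
      _ ≤ d n + L * ∑ k ∈ range n, L ^ (n - 1 - k) * d k := by gcongr
      _ = ∑ k ∈ range (n + 1), L ^ (n + 1 - 1 - k) * d k := by
        rw [sum_range_succ, mul_sum, add_comm, Nat.add_sub_cancel, Nat.sub_self, pow_zero,
          one_mul]
        refine congrArg (· + d n) (sum_congr rfl fun k hk => ?_)
        rw [← mul_assoc, ← pow_succ', show n - 1 - k + 1 = n - k by grind]

theorem tightening_certificate_general
    {X : Type*} [NormedAddCommGroup X] {U : Type*}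
    (fp ft : X × U → X) (Lf : ℝ) (hLf : 0 ≤ Lf)
    (hlip : ∀ (x x' : X) (u : U), ‖fp (x, u) - fp (x', u)‖ ≤ Lf * ‖x - x'‖)
    (g : X → ℝ) (Lg : ℝ) (hLg : 0 ≤ Lg)
    (hglip : ∀ x x' : X, |g x - g x'| ≤ Lg * ‖x - x'‖)
    (u : ℕ → U) (x xt : ℕ → X)
    (hx : ∀ t, x (t + 1) = fp (x t, u t))
    (hxt : ∀ t, xt (t + 1) = ft (xt t, u t))
    (h0 : xt 0 - x 0 = 0) (t : ℕ)
    (htight : g (x t) +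
      Lg * ∑ k ∈ Finset.range t, Lf ^ (t - 1 - k) * ‖ft (xt k, u k) - fp (xt k, u k)‖
        ≤ 0) :
    g (xt t) ≤ 0 := by
  have error_step (n : ℕ) : ‖xt (n + 1) - x (n + 1)‖ ≤
      ‖ft (xt n, u n) - fp (xt n, u n)‖ + Lf * ‖xt n - x n‖ := by
    rw [hxt, hx]
    calc ‖ft (xt n, u n) - fp (x n, u n)‖
        ≤ ‖ft (xt n, u n) - fp (xt n, u n)‖ + ‖fp (xt n, u n) - fp (x n, u n)‖ :=
          norm_sub_le_norm_sub_add_norm_sub _ _ _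
      _ ≤ _ := by gcongr; exact hlip _ _ _
  have error_le := le_sum_pow_mul_of_le_add_mul (a := fun n => ‖xt n - x n‖) hLf
    (norm_eq_zero.2 h0).le error_step t
  calc g (xt t) ≤ g (x t) + Lg * ‖xt t - x t‖ := by
        linarith [(le_abs_self _).trans (hglip (xt t) (x t))]
    _ ≤ _ := by gcongr
    _ ≤ 0 := htight

/-- **Tightening certificate.** Under the discrete mismatch setup with `e₀ = 0`,
if `g` is `L_g`-Lipschitz and the planned state satisfies the tightened
constraint `g(x_t) + ε_t ≤ 0` with
`ε_t = L_g · ∑_{k<t} L_f^{t-1-k} ‖Δ(x^true_k, u_k)‖`, then the true state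
satisfies the original constraint `g(x^true_t) ≤ 0`. -/
theorem tightening_certificate
    {X : Type*} [NormedAddCommGroup X] [NormedSpace ℝ X] {U : Type*}
    (fp ft : X × U → X) (Lf : ℝ) (hLf : 0 ≤ Lf)
    (hlip : ∀ (x x' : X) (u : U), ‖fp (x, u) - fp (x', u)‖ ≤ Lf * ‖x - x'‖)
    (g : X → ℝ) (Lg : ℝ) (hLg : 0 ≤ Lg)
    (hglip : ∀ x x' : X, |g x - g x'| ≤ Lg * ‖x - x'‖)
    (u : ℕ → U) (x xt : ℕ → X)
    (hx : ∀ t, x (t + 1) = fp (x t, u t))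
    (hxt : ∀ t, xt (t + 1) = ft (xt t, u t))
    (h0 : xt 0 - x 0 = 0) (t : ℕ)
    (htight : g (x t) +
      Lg * ∑ k ∈ Finset.range t, Lf ^ (t - 1 - k) * ‖ft (xt k, u k) - fp (xt k, u k)‖
        ≤ 0) :
    g (xt t) ≤ 0 :=
  tightening_certificate_general fp ft Lf hLf hlip g Lg hLg hglip u x xt hx hxt h0 t htight
end

section
/- Let a : ℝ → ℝ be antitone (nonincreasing) on [0, ∞) and define ε(T) = ∫₀^T (T − s) a(s) ds. Then the effective coefficient T ↦ ε(T)/T² is antitone on (0, ∞): for 0 < T₁ ≤ T₂ one has ε(T₂)/T₂² ≤ ε(T₁)/T₁². -/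
open intervalIntegral

/-- Integrability of `u ↦ (1-u) * a(u*T)` on `[0,1]`. -/
lemma aux_integrable (a : ℝ → ℝ) (hmono : AntitoneOn a (Set.Ici 0)) {T : ℝ} (hT : 0 < T) :
    IntervalIntegrable (fun u : ℝ => (fun u : ℝ => a (u * T)) u * (fun u : ℝ => 1 - u) u)
      MeasureTheory.volume 0 1 := by
  apply IntervalIntegrable.mul_continuousOn
  · apply AntitoneOn.intervalIntegrable
    intro x hx y hy hxy
    rw [Set.uIcc_of_le (by norm_num : (0:ℝ) ≤ 1)] at hx hy
    exact hmono (mul_nonneg hx.1 hT.le) (mul_nonneg hy.1 hT.le)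
      (mul_le_mul_of_nonneg_right hxy hT.le)
  · exact (continuous_const.sub continuous_id).continuousOn

/-- Scaling: `ε(T)/T² = ∫₀¹ (1-u) a(uT) du`. -/
lemma aux_scale (a : ℝ → ℝ) {T : ℝ} (hT : 0 < T) :
    (∫ s in (0 : ℝ)..T, (T - s) * a s) / T ^ 2
      = ∫ u in (0 : ℝ)..1, (1 - u) * a (u * T) := by
  have h := intervalIntegral.integral_comp_mul_right (a := (0:ℝ)) (b := 1)
    (fun s => (T - s) * a s) hT.ne'
  simp only [zero_mul, one_mul, smul_eq_mul] at h
  have h2 : (∫ u in (0 : ℝ)..1, (T - u * T) * a (u * T))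
      = T * ∫ u in (0 : ℝ)..1, (1 - u) * a (u * T) := by
    rw [← intervalIntegral.integral_const_mul]
    congr 1
    ext u
    ring
  rw [h2] at h
  field_simp at h ⊢
  linarith [h]

/-- **Monotonicity of the effective coefficient.** If `a` is antitone on `[0, ∞)`,
then `T ↦ ε(T)/T²` with `ε(T) = ∫₀ᵀ (T − s) a(s) ds` is antitone on `(0, ∞)`:
for `0 < T₁ ≤ T₂`, `ε(T₂)/T₂² ≤ ε(T₁)/T₁²`. -/
theorem effective_coefficient_antitone
    (a : ℝ → ℝ)
    (hmono : AntitoneOn a (Set.Ici 0))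
    (T₁ T₂ : ℝ) (hT₁ : 0 < T₁) (hT : T₁ ≤ T₂) :
    (∫ s in (0 : ℝ)..T₂, (T₂ - s) * a s) / T₂ ^ 2 ≤
      (∫ s in (0 : ℝ)..T₁, (T₁ - s) * a s) / T₁ ^ 2 := by
  have hT₂ : 0 < T₂ := hT₁.trans_le hT
  rw [aux_scale a hT₁, aux_scale a hT₂]
  apply intervalIntegral.integral_mono_on (by norm_num)
  · have := aux_integrable a hmono hT₂
    simpa [mul_comm] using this
  · have := aux_integrable a hmono hT₁
    simpa [mul_comm] using this
  · intro u hu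
    apply mul_le_mul_of_nonneg_left _ (by linarith [hu.2])
    exact hmono (Set.mem_Ici.2 (mul_nonneg hu.1 hT₁.le))
      (Set.mem_Ici.2 (mul_nonneg hu.1 hT₂.le))
      (mul_le_mul_of_nonneg_left hT hu.1)
end
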